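/- arXiv:1611.08721 — 7 statements merged into one kernel-verified Lean document; each statement's English description precedes it below -/
import Mathlib

section
/- Let D : ℝ^d → [0,∞) be a depth function (upper semicontinuous, vanishing at infinity) with maximum value α_max, and trimmed regions D_α = {z : D(z) ≥ α}. If (α_n) is a sequence increasing to α_0 ∈ (0, α_max], then the compact sets D_{α_n} converge to D_{α_0} in the Hausdorff metric. -/
/-!
The superlevel sets `{α n ≤ D}` form a decreasing sequence of compact sets (closed by upper
semicontinuity, bounded because `D` vanishes at infinity) whose intersection is `{α₀ ≤ D}`.
By compactness, every neighbourhood of the intersection, in particular its `ε`-thickening,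
eventually contains them, and that bounds the Hausdorff distance by `ε`.
-/

open Filter Metric Set Topology

lemma isCompact_superlevel_of_tendsto_cocompact {X : Type*} [TopologicalSpace X] {f : X → ℝ}
    (hf : UpperSemicontinuous f) {b a : ℝ}
    (hvan : Tendsto f (cocompact X) (𝓝 b)) (hba : b < a) : IsCompact {x | a ≤ f x} := by
  obtain ⟨K, hK, hKc⟩ := mem_cocompact.1 (hvan.eventually (gt_mem_nhds hba))
  refine hK.of_isClosed_subset (hf.isClosed_preimage a) fun x hx => ?_
  by_contra hxK
  exact (hKc hxK).not_ge (show a ≤ f x from hx)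

lemma iInter_superlevel_eq {X : Type*} {f : X → ℝ} {α : ℕ → ℝ} {α₀ : ℝ} (hmono : Monotone α)
    (hlim : Tendsto α atTop (𝓝 α₀)) : ⋂ n, {x | α n ≤ f x} = {x | α₀ ≤ f x} := by
  ext x
  simp only [mem_iInter, mem_ofPred_eq]
  exact ⟨fun h => le_of_tendsto' hlim h, fun h n => (hmono.ge_of_tendsto hlim n).trans h⟩

section Hausdorff

lemma hausdorffDist_le_of_subset_thickening {X : Type*} [PseudoMetricSpace X] {s t : Set X}
    {ε : ℝ} (hε : 0 ≤ ε) (hts : t ⊆ s) (hst : s ⊆ thickening ε t) : hausdorffDist s t ≤ ε :=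
  hausdorffDist_le_of_mem_dist hε
    (fun _ hx => let ⟨y, hy, hxy⟩ := mem_thickening_iff.1 (hst hx); ⟨y, hy, hxy.le⟩)
    (fun x hx => ⟨x, hts hx, (dist_self x).trans_le hε⟩)

variable {X : Type*} [MetricSpace X] {A : ℕ → Set X}

lemma Antitone.eventually_subset_thickening_iInter (hA : Antitone A)
    (hcpt : ∀ n, IsCompact (A n)) {ε : ℝ} (hε : 0 < ε) :
    ∀ᶠ n in atTop, A n ⊆ thickening ε (⋂ m, A m) := by
  obtain ⟨N, hN⟩ := exists_subset_nhds_of_isCompact hA.directed_ge hcpt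
    fun x hx => isOpen_thickening.mem_nhds (self_subset_thickening hε _ hx)
  exact eventually_atTop.2 ⟨N, fun n hn => (hA hn).trans hN⟩

lemma Antitone.tendsto_hausdorffDist_iInter (hA : Antitone A) (hcpt : ∀ n, IsCompact (A n)) :
    Tendsto (fun n => hausdorffDist (A n) (⋂ m, A m)) atTop (𝓝 0) := by
  refine tendsto_order.2 ⟨fun a ha => Eventually.of_forall fun n =>
    ha.trans_le hausdorffDist_nonneg, fun ε hε => ?_⟩
  filter_upwards [hA.eventually_subset_thickening_iInter hcpt (half_pos hε)] with n hn
  exact (hausdorffDist_le_of_subset_thickening (half_pos hε).le (iInter_subset A n) hn).trans_lt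
    (half_lt_self hε)

end Hausdorff

theorem trimmed_regions_left_continuous_general {d : ℕ}
    (D : EuclideanSpace ℝ (Fin d) → ℝ)
    (husc : UpperSemicontinuous D)
    (hvan : Tendsto D (cocompact (EuclideanSpace ℝ (Fin d))) (nhds 0))
    (α : ℕ → ℝ) (α₀ : ℝ)
    (hmono : Monotone α) (hpos : ∀ n, 0 < α n)
    (hlim : Tendsto α atTop (nhds α₀)) :
    Tendsto (fun n => hausdorffDist {z | α n ≤ D z} {z | α₀ ≤ D z}) atTop (nhds 0) := by
  have hA : Antitone fun n => {z | α n ≤ D z} := fun m n hmn z hz => (hmono hmn).trans hz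
  rw [← iInter_superlevel_eq hmono hlim]
  exact hA.tendsto_hausdorffDist_iInter fun n =>
    isCompact_superlevel_of_tendsto_cocompact husc hvan (hpos n)

/-- For a depth function `D` (upper semicontinuous, vanishing at infinity) with maximum
value `αmax`, if `(α n)` increases to `α₀ ∈ (0, αmax]`, then the trimmed regions
`D_{α n}` converge to `D_{α₀}` in the Hausdorff metric. -/
theorem trimmed_regions_left_continuous {d : ℕ}
    (D : EuclideanSpace ℝ (Fin d) → ℝ)
    (hnn : ∀ z, 0 ≤ D z)
    (husc : UpperSemicontinuous D)
    (hvan : Tendsto D (cocompact (EuclideanSpace ℝ (Fin d))) (nhds 0))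
    (αmax : ℝ) (hmax : IsGreatest (Set.range D) αmax)
    (α : ℕ → ℝ) (α₀ : ℝ)
    (hmono : Monotone α) (hpos : ∀ n, 0 < α n)
    (hlim : Tendsto α atTop (nhds α₀))
    (h0 : 0 < α₀) (hle : α₀ ≤ αmax) :
    Tendsto (fun n => hausdorffDist {z | α n ≤ D z} {z | α₀ ≤ D z}) atTop (nhds 0) :=
  trimmed_regions_left_continuous_general D husc hvan α α₀ hmono hpos hlim
end

section
/- Let D : ℝ^d → [0,∞) be a depth function with maximum value α_max and trimmed regions D_α = {z : D(z) ≥ α}. The map α ↦ D_α is continuous on (0, α_max) with respect to the Hausdorff metric if and only if D is strictly monotone for P, i.e., for every α ∈ (0, α_max), D_α equals the closure of {z : D(z) > α}. -/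
/-!
The trimmed regions `D_α` are compact and decrease in `α`. Because `⋂_{β < α} D_β = D_α`,
compactness makes `β ↦ D_β` Hausdorff-continuous from the left at every level, for any upper
semicontinuous `D`. From the right, `D_β` (`β > α`) exhausts `{D > α} = ⋃_{β > α} D_β`, so it can
only approach `closure {D > α}`; continuity from the right is therefore exactly
`D_α = closure {D > α}`.
-/

open Filter Metric Set Topology

theorem antitone_setOf_le {X β : Type*} [Preorder β] (D : X → β) :
    Antitone fun α => {z | α ≤ D z} :=
  fun _ _ h _ hz => le_trans h hz

section Topological

variable {X : Type*} [TopologicalSpace X] {D : X → ℝ}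

theorem UpperSemicontinuous.isClosed_setOf_le (hD : UpperSemicontinuous D) (α : ℝ) :
    IsClosed {z | α ≤ D z} :=
  upperSemicontinuous_iff_isClosed_preimage.1 hD α

theorem UpperSemicontinuous.closure_setOf_lt_subset (hD : UpperSemicontinuous D) (α : ℝ) :
    closure {z | α < D z} ⊆ {z | α ≤ D z} :=
  (hD.isClosed_setOf_le α).closure_subset_iff.2 fun _ (hz : α < D _) => hz.le

theorem UpperSemicontinuous.isCompact_setOf_le (hD : UpperSemicontinuous D)
    (hvan : Tendsto D (cocompact X) (𝓝 0)) {α : ℝ} (hα : 0 < α) :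
    IsCompact {z | α ≤ D z} := by
  obtain ⟨K, hK, hDK⟩ := hasBasis_cocompact.eventually_iff.1 (hvan (Iio_mem_nhds hα))
  exact hK.of_isClosed_subset (hD.isClosed_setOf_le α) fun z (hz : α ≤ D z) =>
    not_not.1 fun hzK => (hDK hzK).not_ge hz

theorem UpperSemicontinuous.eventually_setOf_le_subset (hD : UpperSemicontinuous D) {b α₀ : ℝ}
    (hb : IsCompact {z | b ≤ D z}) (hbα₀ : b < α₀) {U : Set X} (hU : IsOpen U)
    (hU₀ : {z | α₀ ≤ D z} ⊆ U) :
    ∀ᶠ β in 𝓝 α₀, {z | β ≤ D z} ⊆ U := by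
  have : Nonempty (Ico b α₀) := ⟨⟨b, le_rfl, hbα₀⟩⟩
  have hanti := (antitone_setOf_le D).comp_monotone (Subtype.mono_coe (· ∈ Ico b α₀))
  have hinter : ⋂ β : Ico b α₀, {z | β.1 ≤ D z} ⊆ {z | α₀ ≤ D z} := fun z hz =>
    le_of_forall_lt_imp_le_of_dense fun c hc =>
      (le_max_left c b).trans (mem_iInter.1 hz ⟨max c b, le_max_right c b, max_lt hc hbα₀⟩)
  obtain ⟨⟨β₀, hβ₀⟩, hβ₀U⟩ := exists_subset_nhds_of_isCompact' hanti.directed_ge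
    (fun β => hb.of_isClosed_subset (hD.isClosed_setOf_le β) (antitone_setOf_le D β.2.1))
    (fun β => hD.isClosed_setOf_le β) (fun z hz => hU.mem_nhds (hU₀ (hinter hz)))
  filter_upwards [Ici_mem_nhds hβ₀.2] with β hβ
  exact (antitone_setOf_le D hβ).trans hβ₀U

end Topological

section PseudoMetric

variable {X : Type*} [PseudoMetricSpace X]

theorem Metric.hausdorffDist_le_of_subset_thickening {s t : Set X} {r : ℝ} (hr : 0 ≤ r)
    (hs : s ⊆ thickening r t) (ht : t ⊆ thickening r s) : hausdorffDist s t ≤ r := by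
  refine hausdorffDist_le_of_mem_dist hr (fun x hx => ?_) (fun x hx => ?_)
  · obtain ⟨y, hy, hxy⟩ := mem_thickening_iff.1 (hs hx)
    exact ⟨y, hy, hxy.le⟩
  · obtain ⟨y, hy, hxy⟩ := mem_thickening_iff.1 (ht hx)
    exact ⟨y, hy, hxy.le⟩

theorem Metric.subset_closure_of_forall_hausdorffDist_lt {s C : Set X}
    (h : ∀ ε > 0, ∃ t ⊆ C, hausdorffEDist s t ≠ ⊤ ∧ hausdorffDist s t < ε) : s ⊆ closure C := by
  intro x hx
  refine Metric.mem_closure_iff.2 fun ε hε => ?_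
  obtain ⟨t, htC, hfin, hst⟩ := h ε hε
  obtain ⟨y, hy, hxy⟩ := exists_dist_lt_of_hausdorffDist_lt hx hst hfin
  exact ⟨y, htC hy, hxy⟩

variable {D : X → ℝ}

theorem eventually_subset_thickening_setOf_le {S : Set X} {α₀ ε : ℝ} (hε : 0 < ε)
    (hS : IsCompact S) (hSα₀ : S ⊆ closure {z | α₀ < D z}) :
    ∀ᶠ β in 𝓝 α₀, S ⊆ thickening ε {z | β ≤ D z} := by
  have : Nonempty (Ioi α₀) := ⟨⟨α₀ + 1, lt_add_one α₀⟩⟩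
  have hanti : Antitone fun β : Ioi α₀ => thickening ε {z | β.1 ≤ D z} := fun β β' h =>
    thickening_subset_of_subset ε (antitone_setOf_le D (Subtype.mono_coe (· ∈ Ioi α₀) h))
  have hcover : S ⊆ ⋃ β : Ioi α₀, thickening ε {z | β.1 ≤ D z} := fun x hx => by
    obtain ⟨y, hy, hxy⟩ := Metric.mem_closure_iff.1 (hSα₀ hx) ε hε
    exact mem_iUnion.2 ⟨⟨D y, hy⟩, mem_thickening_iff.2 ⟨y, le_refl (D y), hxy⟩⟩
  obtain ⟨⟨β₁, hβ₁⟩, hSβ₁⟩ :=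
    hS.elim_directed_cover _ (fun _ => isOpen_thickening) hcover hanti.directed_le
  filter_upwards [Iic_mem_nhds hβ₁] with β hβ
  exact hSβ₁.trans (thickening_subset_of_subset ε (antitone_setOf_le D hβ))

theorem UpperSemicontinuous.eventually_hausdorffDist_setOf_le_le (hD : UpperSemicontinuous D)
    {b α₀ ε : ℝ} (hb : IsCompact {z | b ≤ D z}) (hbα₀ : b < α₀)
    (hα₀ : {z | α₀ ≤ D z} ⊆ closure {z | α₀ < D z}) (hε : 0 < ε) :
    ∀ᶠ β in 𝓝 α₀, hausdorffDist {z | β ≤ D z} {z | α₀ ≤ D z} ≤ ε := by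
  have hS : IsCompact {z | α₀ ≤ D z} :=
    hb.of_isClosed_subset (hD.isClosed_setOf_le α₀) (antitone_setOf_le D hbα₀.le)
  filter_upwards [hD.eventually_setOf_le_subset hb hbα₀ isOpen_thickening
      (self_subset_thickening hε _), eventually_subset_thickening_setOf_le hε hS hα₀]
    with β h₁ h₂
  exact hausdorffDist_le_of_subset_thickening hε.le h₁ h₂

end PseudoMetric

theorem trimmed_regions_continuous_iff_strictly_monotone_general {d : ℕ}
    (D : EuclideanSpace ℝ (Fin d) → ℝ)
    (husc : UpperSemicontinuous D)
    (hvan : Tendsto D (cocompact (EuclideanSpace ℝ (Fin d))) (nhds 0))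
    (αmax : ℝ) (hmax : IsGreatest (Set.range D) αmax) :
    (∀ α₀ ∈ Set.Ioo (0 : ℝ) αmax, ∀ ε > 0, ∃ δ > 0, ∀ β ∈ Set.Ioo (0 : ℝ) αmax,
        |β - α₀| < δ → hausdorffDist {z | β ≤ D z} {z | α₀ ≤ D z} < ε)
      ↔ (∀ α ∈ Set.Ioo (0 : ℝ) αmax, {z | α ≤ D z} = closure {z | α < D z}) := by
  obtain ⟨⟨x₀, hx₀⟩, -⟩ := hmax
  have hcompact {α : ℝ} (hα : 0 < α) := husc.isCompact_setOf_le hvan hα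
  have hfin {α β : ℝ} (hα : α ∈ Ioo 0 αmax) (hβ : β ∈ Ioo 0 αmax) :
      hausdorffEDist {z | α ≤ D z} {z | β ≤ D z} ≠ ⊤ :=
    hausdorffEDist_ne_top_of_nonempty_of_bounded ⟨x₀, hx₀.ge.trans' hα.2.le⟩
      ⟨x₀, hx₀.ge.trans' hβ.2.le⟩ (hcompact hα.1).isBounded (hcompact hβ.1).isBounded
  constructor
  · intro hcont α hα
    refine (subset_closure_of_forall_hausdorffDist_lt fun ε hε => ?_).antisymm
      (husc.closure_setOf_lt_subset α)
    obtain ⟨δ, hδ, hαδ⟩ := hcont α hα ε hε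
    obtain ⟨β, hαβ, hβ⟩ := exists_between (lt_min (lt_add_of_pos_right α hδ) hα.2)
    have hβ' : β ∈ Ioo 0 αmax := ⟨hα.1.trans hαβ, hβ.trans_le (min_le_right _ _)⟩
    refine ⟨{z | β ≤ D z}, fun z (hz : β ≤ D z) => hαβ.trans_le hz, hfin hα hβ', ?_⟩
    rw [hausdorffDist_comm]
    exact hαδ β hβ' (abs_sub_lt_iff.2 ⟨by linarith [min_le_left (α + δ) αmax], by linarith⟩)
  · intro hsm α₀ hα₀ ε hε
    obtain ⟨δ, hδ, hα₀δ⟩ := Metric.eventually_nhds_iff.1 <|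
      husc.eventually_hausdorffDist_setOf_le_le (hcompact (half_pos hα₀.1)) (half_lt_self hα₀.1)
        (hsm α₀ hα₀).subset (half_pos hε)
    exact ⟨δ, hδ, fun β _ hβ => (hα₀δ hβ).trans_lt (half_lt_self hε)⟩

/-- The map `α ↦ D_α` is continuous on `(0, αmax)` w.r.t. the Hausdorff metric
if and only if `D` is strictly monotone, i.e. `D_α = closure {z | α < D z}`
for every `α ∈ (0, αmax)`. -/
theorem trimmed_regions_continuous_iff_strictly_monotone {d : ℕ}
    (D : EuclideanSpace ℝ (Fin d) → ℝ)
    (hnn : ∀ z, 0 ≤ D z)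
    (husc : UpperSemicontinuous D)
    (hvan : Tendsto D (cocompact (EuclideanSpace ℝ (Fin d))) (nhds 0))
    (αmax : ℝ) (hmax : IsGreatest (Set.range D) αmax) (hαpos : 0 < αmax) :
    (∀ α₀ ∈ Set.Ioo (0 : ℝ) αmax, ∀ ε > 0, ∃ δ > 0, ∀ β ∈ Set.Ioo (0 : ℝ) αmax,
        |β - α₀| < δ → hausdorffDist {z | β ≤ D z} {z | α₀ ≤ D z} < ε)
      ↔ (∀ α ∈ Set.Ioo (0 : ℝ) αmax, {z | α ≤ D z} = closure {z | α < D z}) :=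
  trimmed_regions_continuous_iff_strictly_monotone_general D husc hvan αmax hmax
end

section
/- Let D^n, D : ℝ^d → [0,∞) be depth functions (upper semicontinuous, vanishing at infinity) with convex superlevel sets, and suppose D is strictly monotone for P (D_α = closure{z : D(z) > α} for every α ∈ (0, α_max)) and the superlevel sets D_α have nonempty interior for 0 < α < α_max. If D^n converges pointwise to D, then for every α ∈ (0, α_max), the compact convex sets D_α^n converge to D_α in the Hausdorff metric. -/
open Filter Metric Set Topology

set_option maxHeartbeats 1000000

lemma depth_level_isCompact {d : ℕ} (f : EuclideanSpace ℝ (Fin d) → ℝ)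
    (husc : UpperSemicontinuous f)
    (hvan : Tendsto f (cocompact (EuclideanSpace ℝ (Fin d))) (nhds 0)) {α : ℝ} (hα : 0 < α) :
    IsCompact {z | α ≤ f z} := by
  have hcl : IsClosed {z | α ≤ f z} := by
    have h := upperSemicontinuous_iff_isOpen_preimage.1 husc α
    have he : {z | α ≤ f z} = (f ⁻¹' Iio α)ᶜ := by ext z; simp [not_lt]
    rw [he]; exact h.isClosed_compl
  obtain ⟨t, htc, hts⟩ := mem_cocompact.mp (hvan (Iio_mem_nhds hα))
  refine htc.of_isClosed_subset hcl (fun z hz => ?_)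
  by_contra h
  exact absurd (hts h) (by simpa using hz)

/-- For convex depth functions, if `D` is strictly monotone (with trimmed regions of
nonempty interior), pointwise convergence of the depths implies pointwise Hausdorff
convergence of the trimmed regions on `(0, αmax)`. -/
theorem pointwise_depth_convergence_implies_pointwise_region_convergence {d : ℕ}
    (Dn : ℕ → EuclideanSpace ℝ (Fin d) → ℝ) (D : EuclideanSpace ℝ (Fin d) → ℝ)
    (hDn_nn : ∀ n z, 0 ≤ Dn n z) (hD_nn : ∀ z, 0 ≤ D z)
    (hDn_usc : ∀ n, UpperSemicontinuous (Dn n)) (hD_usc : UpperSemicontinuous D)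
    (hDn_van : ∀ n, Tendsto (Dn n) (cocompact (EuclideanSpace ℝ (Fin d))) (nhds 0))
    (hD_van : Tendsto D (cocompact (EuclideanSpace ℝ (Fin d))) (nhds 0))
    (hDn_cvx : ∀ n, ∀ α : ℝ, 0 < α → Convex ℝ {z | α ≤ Dn n z})
    (hD_cvx : ∀ α : ℝ, 0 < α → Convex ℝ {z | α ≤ D z})
    (αmax : ℝ) (hmax : IsGreatest (Set.range D) αmax)
    (hsm : ∀ α : ℝ, 0 < α → α < αmax → {z | α ≤ D z} = closure {z | α < D z})
    (hint : ∀ α : ℝ, 0 < α → α < αmax → (interior {z | α ≤ D z}).Nonempty)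
    (hptw : ∀ z, Tendsto (fun n => Dn n z) atTop (nhds (D z))) :
    ∀ α : ℝ, 0 < α → α < αmax →
      Tendsto (fun n => hausdorffDist {z | α ≤ Dn n z} {z | α ≤ D z}) atTop (nhds 0) := by
  intro α hα0 hαmax
  set K : Set (EuclideanSpace ℝ (Fin d)) := {z | α ≤ D z} with hKdef
  have hK_cpt : IsCompact K := depth_level_isCompact D hD_usc hD_van hα0
  have hK_closed : IsClosed K := hK_cpt.isClosed
  obtain ⟨z₀, hz₀⟩ := hmax.1
  have hK_ne : K.Nonempty := ⟨z₀, by simp only [hKdef, mem_setOf_eq, hz₀]; exact hαmax.le⟩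
  -- anchor ball
  set α' : ℝ := (α + αmax) / 2 with hα'def
  have hα'1 : α < α' := by rw [hα'def]; linarith
  have hα'2 : α' < αmax := by rw [hα'def]; linarith
  have hα'0 : 0 < α' := lt_trans hα0 hα'1
  obtain ⟨c, hc_int⟩ := hint α' hα'0 hα'2
  obtain ⟨b, hcb, hbs⟩ :=
    exists_mem_interior_convexHull_affineBasis (mem_interior_iff_mem_nhds.1 hc_int)
  obtain ⟨ρ, hρ0, hρball⟩ := Metric.isOpen_iff.1 isOpen_interior c hcb
  have hball_conv : ball c ρ ⊆ convexHull ℝ (range ⇑b) := hρball.trans interior_subset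
  have hcK : c ∈ K := by
    have h1 : c ∈ {z | α' ≤ D z} := interior_subset hc_int
    exact le_trans hα'1.le h1
  have hanchor : ∀ᶠ n in atTop, ∀ x ∈ ball c ρ, α ≤ Dn n x := by
    have hvert : ∀ᶠ n in atTop, ∀ i, α ≤ Dn n (b i) := by
      rw [eventually_all]
      intro i
      have hbi : b i ∈ {z | α' ≤ D z} :=
        hbs (subset_convexHull ℝ _ (mem_range_self i))
      exact ((hptw (b i)).eventually_const_lt (lt_of_lt_of_le hα'1 hbi)).mono
        fun n h => h.le
    refine hvert.mono fun n hn x hx => ?_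
    have hsub : convexHull ℝ (range ⇑b) ⊆ {z | α ≤ Dn n z} :=
      convexHull_min (by rintro y ⟨i, rfl⟩; exact hn i) (hDn_cvx n α hα0)
    exact hsub (hball_conv hx)
  -- main estimate
  have key : ∀ ε : ℝ, 0 < ε → ∀ᶠ n in atTop,
      hausdorffDist {z | α ≤ Dn n z} K ≤ ε / 2 := by
    intro ε hε
    have hε2 : 0 < ε / 2 := by positivity
    -- inner net
    have Hin : ∀ i : K, ∃ q, α < D q ∧ dist (i : EuclideanSpace ℝ (Fin d)) q < ε / 2 := by
      rintro ⟨x, hx⟩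
      have hx' : x ∈ closure {z | α < D z} := by
        rw [← hsm α hα0 hαmax]; exact hx
      rw [Metric.mem_closure_iff] at hx'
      obtain ⟨q, hq, hdq⟩ := hx' (ε / 2) hε2
      exact ⟨q, hq, hdq⟩
    choose p hp hdp using Hin
    have hKcover : K ⊆ ⋃ i : K, ball (p i) (ε / 2) := fun x hx =>
      mem_iUnion.2 ⟨⟨x, hx⟩, mem_ball.2 (hdp ⟨x, hx⟩)⟩
    obtain ⟨t₁, ht₁⟩ := hK_cpt.elim_finite_subcover
      (fun i : K => ball (p i) (ε / 2)) (fun i => isOpen_ball) hKcover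
    have hev1 : ∀ᶠ n in atTop, ∀ i ∈ t₁, α ≤ Dn n (p i) := by
      rw [eventually_all_finset]
      intro i _
      exact ((hptw (p i)).eventually_const_lt (hp i)).mono fun n h => h.le
    -- shell
    have hF_cpt : IsCompact {y | infDist y K = ε / 2} := by
      have hcl : IsClosed {y | infDist y K = ε / 2} :=
        isClosed_singleton.preimage (continuous_infDist_pt K)
      obtain ⟨R, hR⟩ := hK_cpt.isBounded.subset_closedBall c
      refine isCompact_of_isClosed_isBounded hcl ((isBounded_closedBall
        (x := c) (r := R + (ε / 2 + 1))).subset fun y hy => ?_)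
      have hlt : infDist y K < ε / 2 + 1 := by
        rw [mem_setOf_eq] at hy; linarith
      obtain ⟨k, hk, hdk⟩ := (infDist_lt_iff hK_ne).1 hlt
      have hkc : dist k c ≤ R := hR hk
      rw [mem_closedBall]
      calc dist y c ≤ dist y k + dist k c := dist_triangle _ _ _
        _ ≤ R + (ε / 2 + 1) := by linarith
    -- per-point shell statement
    have Hsh : ∀ i : {y : EuclideanSpace ℝ (Fin d) // infDist y K = ε / 2},
        ∃ δ, 0 < δ ∧ ∃ w, D w < α ∧
          ∀ n, (∀ x ∈ ball c ρ, α ≤ Dn n x) →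
            ∀ z ∈ ball (i : EuclideanSpace ℝ (Fin d)) δ, α ≤ Dn n z → α ≤ Dn n w := by
      rintro ⟨y₀, hy₀⟩
      have hcont : Continuous fun l : ℝ => infDist ((1 - l) • c + l • y₀) K :=
        (continuous_infDist_pt K).comp
          (((continuous_const.sub continuous_id).smul continuous_const).add
            (continuous_id.smul continuous_const))
      have hopen : IsOpen {l : ℝ | 0 < infDist ((1 - l) • c + l • y₀) K} :=
        isOpen_lt continuous_const hcont
      have h1mem : (1 : ℝ) ∈ {l : ℝ | 0 < infDist ((1 - l) • c + l • y₀) K} := by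
        simp only [mem_setOf_eq, sub_self, zero_smul, one_smul, zero_add, hy₀]
        exact hε2
      obtain ⟨η, hη0, hηsub⟩ := Metric.isOpen_iff.1 hopen 1 h1mem
      set lam : ℝ := max (1 / 2) (1 - η / 2) with hlamdef
      have hlam0 : 0 < lam := lt_of_lt_of_le one_half_pos (le_max_left _ _)
      have hlam1 : lam < 1 := max_lt (by norm_num) (by linarith)
      have hlammem : lam ∈ ball (1 : ℝ) η := by
        rw [mem_ball, Real.dist_eq, abs_sub_lt_iff]
        constructor
        · linarith
        · have : 1 - η / 2 ≤ lam := le_max_right _ _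
          linarith
      have h1l : (0 : ℝ) < 1 - lam := by linarith
      set w : EuclideanSpace ℝ (Fin d) := (1 - lam) • c + lam • y₀ with hwdef
      have hwpos : 0 < infDist w K := hηsub hlammem
      have hwK : w ∉ K := fun hw => absurd (infDist_zero_of_mem hw) (ne_of_lt hwpos).symm
      have hwD : D w < α := by
        by_contra h
        exact hwK (not_lt.1 h)
      refine ⟨(1 - lam) / lam * ρ, by positivity, w, hwD, ?_⟩
      intro n hanc z hz hzn
      set c'' : EuclideanSpace ℝ (Fin d) := c + (lam / (1 - lam)) • (y₀ - z) with hc''def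
      have hc''mem : c'' ∈ ball c ρ := by
        rw [mem_ball, dist_eq_norm]
        have he : c'' - c = (lam / (1 - lam)) • (y₀ - z) := by
          rw [hc''def]; abel
        rw [he, norm_smul, Real.norm_eq_abs, abs_of_pos (by positivity)]
        have hzlt : ‖y₀ - z‖ < (1 - lam) / lam * ρ := by
          rw [mem_ball, dist_eq_norm] at hz
          rw [norm_sub_rev]
          exact hz
        calc lam / (1 - lam) * ‖y₀ - z‖
            < lam / (1 - lam) * ((1 - lam) / lam * ρ) := by
              exact mul_lt_mul_of_pos_left hzlt (by positivity)
          _ = ρ := by field_simp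
      have hw_eq : lam • z + (1 - lam) • c'' = w := by
        rw [hc''def, hwdef]
        have hs : (1 - lam) * (lam / (1 - lam)) = lam := by field_simp
        rw [smul_add, smul_smul, hs, smul_sub]
        abel
      have hmem := hDn_cvx n α hα0 hzn (hanc _ hc''mem) hlam0.le h1l.le (by ring)
      rw [hw_eq] at hmem
      exact hmem
    choose δ hδ w hwD hkey using Hsh
    have hFcover : {y | infDist y K = ε / 2} ⊆
        ⋃ i : {y : EuclideanSpace ℝ (Fin d) // infDist y K = ε / 2},
          ball (i : EuclideanSpace ℝ (Fin d)) (δ i) := fun y hy =>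
      mem_iUnion.2 ⟨⟨y, hy⟩, mem_ball_self (hδ _)⟩
    obtain ⟨t₂, ht₂⟩ := hF_cpt.elim_finite_subcover _ (fun i => isOpen_ball) hFcover
    have hev2 : ∀ᶠ n in atTop, ∀ i ∈ t₂, Dn n (w i) < α := by
      rw [eventually_all_finset]
      intro i _
      exact (hptw (w i)).eventually_lt_const (hwD i)
    filter_upwards [hev1, hev2, hanchor] with n h1 h2 hanc
    refine hausdorffDist_le_of_mem_dist hε2.le ?_ ?_
    · -- outer: points of Kn are close to K
      intro x hx
      have hcn : α ≤ Dn n c := hanc c (mem_ball_self hρ0)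
      have hinf : infDist x K ≤ ε / 2 := by
        by_contra hgt
        push_neg at hgt
        have hcontf : ContinuousOn (fun t : ℝ => infDist ((1 - t) • c + t • x) K)
            (Icc 0 1) :=
          ((continuous_infDist_pt K).comp
            (((continuous_const.sub continuous_id).smul continuous_const).add
              (continuous_id.smul continuous_const))).continuousOn
        have hiv := intermediate_value_Icc (zero_le_one) hcontf
        have hmem : ε / 2 ∈ Icc (infDist ((1 - (0:ℝ)) • c + (0:ℝ) • x) K)
            (infDist ((1 - (1:ℝ)) • c + (1:ℝ) • x) K) := by
          simp only [sub_zero, one_smul, zero_smul, add_zero, sub_self, zero_add]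
          rw [infDist_zero_of_mem hcK]
          exact ⟨hε2.le, hgt.le⟩
        obtain ⟨t, ht01, hft⟩ := hiv hmem
        set y : EuclideanSpace ℝ (Fin d) := (1 - t) • c + t • x with hydef
        have hyF : infDist y K = ε / 2 := hft
        obtain ⟨i, hi, hyb⟩ := mem_iUnion₂.1 (ht₂ hyF)
        have hyn : α ≤ Dn n y := by
          have := hDn_cvx n α hα0 hcn hx (by linarith [ht01.1, ht01.2] : (0:ℝ) ≤ 1 - t)
            ht01.1 (by ring)
          exact this
        have := hkey i n hanc y hyb hyn
        exact absurd this (not_le.2 (h2 i hi))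
      obtain ⟨y, hy, hyd⟩ := hK_cpt.exists_infDist_eq_dist hK_ne x
      exact ⟨y, hy, by rw [← hyd]; exact hinf⟩
    · -- inner: points of K are close to Kn
      intro x hx
      obtain ⟨i, hi, hxb⟩ := mem_iUnion₂.1 (ht₁ hx)
      exact ⟨p i, h1 i hi, (mem_ball.1 hxb).le⟩
  -- conclude
  rw [Metric.tendsto_atTop]
  intro ε hε
  obtain ⟨N, hN⟩ := eventually_atTop.1 (key ε hε)
  refine ⟨N, fun n hn => ?_⟩
  rw [Real.dist_eq, sub_zero, abs_of_nonneg hausdorffDist_nonneg]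
  have := hN n hn
  linarith
end

section
/- Let D^n, D : ℝ^d → [0,∞) be depth functions (upper semicontinuous, vanishing at infinity, superlevel sets starshaped and compact for α > 0), with D nonconstant (attaining a positive value). If D^n converges to D uniformly on every compact subset of ℝ^d, then D^n converges to D uniformly on all of ℝ^d. -/
open Filter Metric Set Topology

/-! Fix `x₀` with `D x₀ > 0` and a small level `α`. Far out `D < α / 2`, and on a large ball
uniform convergence makes `Dn n` within `α / 2` of `D`, so for large `n` the superlevel set
`{Dn n ≥ α}` contains `x₀` but misses the bounding sphere. Being starshaped, hence connected,
it lies inside the ball; outside it both functions are in `[0, α)`, hence within `α` of each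
other. -/

theorem Metric.exists_ge_forall_le_dist_of_eventually_cocompact {X : Type*} [PseudoMetricSpace X]
    [ProperSpace X] {p : X → Prop} (h : ∀ᶠ z in cocompact X, p z) (c : X) (r₀ : ℝ) :
    ∃ r, r₀ ≤ r ∧ ∀ z, r ≤ dist z c → p z := by
  rw [← cobounded_eq_cocompact, ← comap_dist_right_atTop c, eventually_comap,
    eventually_atTop] at h
  obtain ⟨R, hR⟩ := h
  exact ⟨max R r₀, le_max_right _ _, fun z hz => hR _ ((le_max_left _ _).trans hz) z rfl⟩

theorem IsPreconnected.lt_of_le_dist_of_forall_dist_eq_lt {X : Type*} [PseudoMetricSpace X]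
    {f : X → ℝ} {α r : ℝ} {c x₀ z : X} (hconn : IsPreconnected {w | α ≤ f w})
    (hx₀ : α ≤ f x₀) (hx₀r : dist x₀ c ≤ r) (hsphere : ∀ w, dist w c = r → f w < α)
    (hz : r ≤ dist z c) : f z < α := by
  by_contra! h
  obtain ⟨w, hw, hwr⟩ := hconn.intermediate_value hx₀ h
    (continuous_id.dist continuous_const).continuousOn ⟨hx₀r, hz⟩
  exact (hsphere w hwr).not_ge hw

theorem compact_convergence_implies_uniform_convergence_general {d : ℕ}
    (Dn : ℕ → EuclideanSpace ℝ (Fin d) → ℝ) (D : EuclideanSpace ℝ (Fin d) → ℝ)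
    (hDn_nn : ∀ n z, 0 ≤ Dn n z) (hD_nn : ∀ z, 0 ≤ D z)
    (hD_van : Tendsto D (cocompact (EuclideanSpace ℝ (Fin d))) (nhds 0))
    (hDn_star : ∀ n, ∀ α : ℝ, 0 < α → {z | α ≤ Dn n z}.Nonempty →
      ∃ x ∈ {z | α ≤ Dn n z}, StarConvex ℝ x {z | α ≤ Dn n z})
    (hpos : ∃ x, 0 < D x)
    (hcpt : ∀ K : Set (EuclideanSpace ℝ (Fin d)), IsCompact K →
      TendstoUniformlyOn (fun n => Dn n) D atTop K) :
    TendstoUniformly (fun n => Dn n) D atTop := by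
  obtain ⟨x₀, hx₀⟩ := hpos
  rw [Metric.tendstoUniformly_iff]
  intro ε hε
  obtain ⟨α, hα, hαε, hαx₀⟩ : ∃ α, 0 < α ∧ α < ε ∧ 2 * α ≤ D x₀ :=
    ⟨min ε (D x₀) / 2, by positivity, by linarith [min_le_left ε (D x₀)],
      by linarith [min_le_right ε (D x₀)]⟩
  obtain ⟨r, hx₀r, hD_far⟩ := exists_ge_forall_le_dist_of_eventually_cocompact
    (hD_van.eventually (gt_mem_nhds (half_pos hα))) 0 (dist x₀ 0)
  filter_upwards [Metric.tendstoUniformlyOn_iff.mp (hcpt _ (isCompact_closedBall 0 r))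
    (α / 2) (half_pos hα)] with n hn z
  have hclose : ∀ w, dist w 0 ≤ r → |D w - Dn n w| < α / 2 := fun w hw =>
    Real.dist_eq _ _ ▸ hn w (mem_closedBall.2 hw)
  by_cases hz : dist z 0 ≤ r
  · exact (hn z (mem_closedBall.2 hz)).trans (by linarith)
  have hx₀_level : α ≤ Dn n x₀ := by linarith [abs_lt.1 (hclose x₀ hx₀r)]
  obtain ⟨x, hx, hstar⟩ := hDn_star n α hα ⟨x₀, hx₀_level⟩
  have hDn_z : Dn n z < α :=
    (hstar.isPathConnected hx).isConnected.isPreconnected.lt_of_le_dist_of_forall_dist_eq_lt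
      hx₀_level hx₀r (fun w hw => by
        linarith [abs_lt.1 (hclose w hw.le), hD_far w hw.ge]) (le_of_not_ge hz)
  rw [Real.dist_eq]
  exact (abs_sub_lt_of_nonneg_of_lt (hD_nn z) (by linarith [hD_far z (le_of_not_ge hz)])
    (hDn_nn n z) hDn_z).trans hαε

/-- For depth functions (usc, vanishing at infinity, compact starshaped superlevel sets)
with `D` nonconstant, uniform convergence on compact sets implies uniform convergence
on all of `ℝ^d`. -/
theorem compact_convergence_implies_uniform_convergence {d : ℕ}
    (Dn : ℕ → EuclideanSpace ℝ (Fin d) → ℝ) (D : EuclideanSpace ℝ (Fin d) → ℝ)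
    (hDn_nn : ∀ n z, 0 ≤ Dn n z) (hD_nn : ∀ z, 0 ≤ D z)
    (hDn_usc : ∀ n, UpperSemicontinuous (Dn n)) (hD_usc : UpperSemicontinuous D)
    (hDn_van : ∀ n, Tendsto (Dn n) (cocompact (EuclideanSpace ℝ (Fin d))) (nhds 0))
    (hD_van : Tendsto D (cocompact (EuclideanSpace ℝ (Fin d))) (nhds 0))
    (hDn_star : ∀ n, ∀ α : ℝ, 0 < α → {z | α ≤ Dn n z}.Nonempty →
      ∃ x ∈ {z | α ≤ Dn n z}, StarConvex ℝ x {z | α ≤ Dn n z})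
    (hD_star : ∀ α : ℝ, 0 < α → {z | α ≤ D z}.Nonempty →
      ∃ x ∈ {z | α ≤ D z}, StarConvex ℝ x {z | α ≤ D z})
    (hpos : ∃ x, 0 < D x)
    (hcpt : ∀ K : Set (EuclideanSpace ℝ (Fin d)), IsCompact K →
      TendstoUniformlyOn (fun n => Dn n) D atTop K) :
    TendstoUniformly (fun n => Dn n) D atTop :=
  compact_convergence_implies_uniform_convergence_general Dn D hDn_nn hD_nn hD_van hDn_star hpos
    hcpt
end

section
/- Let D^n, D : ℝ^d → [0,∞) be depth functions with compact starshaped superlevel sets for α > 0, and D nonconstant. Then D^n → D uniformly on ℝ^d if and only if for every α > 0 and every ε > 0 there exists N such that for all n ≥ N and all β ≥ α: D_{β+ε} ⊆ D_β^n ⊆ D_{β−ε}, where D_γ = {z : D(z) ≥ γ} and D_β^n = {z : D^n(z) ≥ β}. -/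
/-!
Uniform `ε`-closeness of `Dⁿ` to `D` is the same as the sandwich
`D_{β+ε} ⊆ Dⁿ_β ⊆ D_{β-ε}` at every level `β`. Restricting to levels `β ≥ α` only loses
control at points where one of the depths is below `α`, and there nonnegativity keeps the
two depths within `α` of each other anyway.
-/

open Filter Metric Set

section SuperlevelSets

variable {X : Type*} {f g : X → ℝ} {α ε : ℝ}

lemma superlevel_subset_sub_of_add_subset
    (h : ∀ β ≥ α, {z | β + ε ≤ f z} ⊆ {z | β ≤ g z}) :
    ∀ β ≥ α + ε, {z | β ≤ f z} ⊆ {z | β - ε ≤ g z} := fun β hβ => by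
  simpa using h (β - ε) (by linarith)

lemma le_add_max_of_superlevel_subset
    (h : ∀ β ≥ α, {z | β ≤ g z} ⊆ {z | β - ε ≤ f z}) {z : X} (hf : 0 ≤ f z) :
    g z ≤ f z + max α ε := by
  rcases le_or_gt α (g z) with hz | hz
  · have : g z - ε ≤ f z := h (g z) hz (show g z ≤ g z from le_rfl)
    linarith [le_max_right α ε]
  · linarith [le_max_left α ε]

variable {ι : Type*} {p : Filter ι} {F : ι → X → ℝ}

lemma TendstoUniformly.eventually_superlevel_sandwich (h : TendstoUniformly F f p)
    (hε : 0 < ε) :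
    ∀ᶠ n in p, ∀ β, {z | β + ε ≤ f z} ⊆ {z | β ≤ F n z} ∧
      {z | β ≤ F n z} ⊆ {z | β - ε ≤ f z} := by
  filter_upwards [tendstoUniformly_iff.mp h ε hε] with n hn β
  refine ⟨fun z hz => ?_, fun z hz => ?_⟩ <;>
  · have := hn z
    rw [Real.dist_eq, abs_sub_lt_iff] at this
    simp only [mem_ofPred_eq] at hz ⊢
    linarith

lemma tendstoUniformly_of_superlevel_sandwich (hF : ∀ n z, 0 ≤ F n z) (hf : ∀ z, 0 ≤ f z)
    (h : ∀ ε > 0, ∀ᶠ n in p, ∀ β ≥ ε, {z | β + ε ≤ f z} ⊆ {z | β ≤ F n z} ∧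
      {z | β ≤ F n z} ⊆ {z | β - ε ≤ f z}) :
    TendstoUniformly F f p := by
  refine tendstoUniformly_iff.mpr fun ε hε => ?_
  filter_upwards [h (ε / 3) (by positivity)] with n hn z
  have hupper : F n z ≤ f z + max (ε / 3) (ε / 3) :=
    le_add_max_of_superlevel_subset (fun β hβ => (hn β hβ).2) (hf z)
  have hlower : f z ≤ F n z + max (ε / 3 + ε / 3) (ε / 3) :=
    le_add_max_of_superlevel_subset
      (superlevel_subset_sub_of_add_subset fun β hβ => (hn β hβ).1) (hF n z)
  rw [max_self] at hupper
  rw [max_eq_left (by linarith)] at hlower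
  rw [Real.dist_eq, abs_sub_lt_iff]
  constructor <;> linarith

end SuperlevelSets

theorem uniform_convergence_iff_region_sandwich_general {d : ℕ}
    (Dn : ℕ → EuclideanSpace ℝ (Fin d) → ℝ) (D : EuclideanSpace ℝ (Fin d) → ℝ)
    (hDn_nn : ∀ n z, 0 ≤ Dn n z) (hD_nn : ∀ z, 0 ≤ D z) :
    TendstoUniformly (fun n => Dn n) D atTop
      ↔ (∀ α : ℝ, 0 < α → ∀ ε : ℝ, 0 < ε → ∃ N, ∀ n ≥ N, ∀ β : ℝ, α ≤ β →
          {z | β + ε ≤ D z} ⊆ {z | β ≤ Dn n z} ∧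
          {z | β ≤ Dn n z} ⊆ {z | β - ε ≤ D z}) := by
  constructor
  · intro h α _ ε hε
    exact eventually_atTop.mp
      ((h.eventually_superlevel_sandwich hε).mono fun n hn β _ => hn β)
  · intro h
    refine tendstoUniformly_of_superlevel_sandwich hDn_nn hD_nn fun ε hε => ?_
    exact eventually_atTop.mpr (h ε hε ε hε)

/-- For depth functions with compact starshaped superlevel sets and `D` nonconstant,
uniform convergence of the depths is equivalent to the sandwich condition on the
trimmed regions. -/
theorem uniform_convergence_iff_region_sandwich {d : ℕ}
    (Dn : ℕ → EuclideanSpace ℝ (Fin d) → ℝ) (D : EuclideanSpace ℝ (Fin d) → ℝ)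
    (hDn_nn : ∀ n z, 0 ≤ Dn n z) (hD_nn : ∀ z, 0 ≤ D z)
    (hDn_usc : ∀ n, UpperSemicontinuous (Dn n)) (hD_usc : UpperSemicontinuous D)
    (hDn_van : ∀ n, Tendsto (Dn n) (cocompact (EuclideanSpace ℝ (Fin d))) (nhds 0))
    (hD_van : Tendsto D (cocompact (EuclideanSpace ℝ (Fin d))) (nhds 0))
    (hDn_star : ∀ n, ∀ α : ℝ, 0 < α → {z | α ≤ Dn n z}.Nonempty →
      ∃ x ∈ {z | α ≤ Dn n z}, StarConvex ℝ x {z | α ≤ Dn n z})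
    (hD_star : ∀ α : ℝ, 0 < α → {z | α ≤ D z}.Nonempty →
      ∃ x ∈ {z | α ≤ D z}, StarConvex ℝ x {z | α ≤ D z})
    (hpos : ∃ x, 0 < D x) :
    TendstoUniformly (fun n => Dn n) D atTop
      ↔ (∀ α : ℝ, 0 < α → ∀ ε : ℝ, 0 < ε → ∃ N, ∀ n ≥ N, ∀ β : ℝ, α ≤ β →
          {z | β + ε ≤ D z} ⊆ {z | β ≤ Dn n z} ∧
          {z | β ≤ Dn n z} ⊆ {z | β - ε ≤ D z}) :=
  uniform_convergence_iff_region_sandwich_general Dn D hDn_nn hD_nn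
end

section
/- Let D^n, D : ℝ^d → [0,∞) be depth functions with compact superlevel sets, α_max = max D, and D strictly monotone for P. Then pointwise Hausdorff convergence of the trimmed regions (δ_H(D_α^n, D_α) → 0 for every α ∈ (0,α_max)) is equivalent to compact Hausdorff convergence (sup_{α∈A} δ_H(D_α^n, D_α) → 0 for every compact interval A ⊂ (0,α_max)). -/
/-!
Trimmed regions shrink as the level grows, so for `α` between two levels `β₁ < β₂` the region
`Dₙ_α` is squeezed between `Dₙ_{β₂}` and `Dₙ_{β₁}`, and `D_α` between `D_{β₂}` and `D_{β₁}`.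
Hence `δ_H(Dₙ_α, D_α)` is at most `δ_H(D_{β₁}, D_{β₂})` plus the errors at the two levels `β₁, β₂`.
Continuity of `α ↦ D_α` (from the right by strict monotonicity, from the left by compactness of
the nested regions) makes the first term small for `β₁, β₂` close to `α`; pointwise
convergence at `β₁, β₂` makes the second small for all `α ∈ (β₁, β₂)` at once. Compactness of
`[a, b]` turns this local uniformity into uniformity on `[a, b]`.
-/

open Filter Metric Set Topology

theorem IsCompact.eventually_forall_of_forall_exists_mem_nhds {X ι : Type*} [TopologicalSpace X]
    {K : Set X} (hK : IsCompact K) {l : Filter ι} {P : ι → X → Prop}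
    (h : ∀ x ∈ K, ∃ U ∈ 𝓝 x, ∀ᶠ i in l, ∀ y ∈ U, P i y) : ∀ᶠ i in l, ∀ y ∈ K, P i y := by
  choose! U hU hP using h
  obtain ⟨t, htK, hKt⟩ := hK.elim_nhds_subcover U hU
  filter_upwards [(eventually_all_finset t).2 fun x hx => hP x (htK x hx)] with i hi y hy
  obtain ⟨x, hx, hyx⟩ := mem_iUnion₂.1 (hKt hy)
  exact hi x hx y hyx

theorem setOf_le_subset_setOf_le {X Y : Type*} [Preorder Y] {f : X → Y} {a b : Y} (h : a ≤ b) :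
    {x | b ≤ f x} ⊆ {x | a ≤ f x} :=
  fun _ hx => h.trans hx

section Hausdorff

variable {E : Type*} [PseudoMetricSpace E]

theorem hausdorffDist_le_of_subset_of_subset_thickening {s t : Set E} {r : ℝ} (hr : 0 ≤ r)
    (hts : t ⊆ s) (hst : s ⊆ thickening r t) : hausdorffDist s t ≤ r := by
  refine hausdorffDist_le_of_mem_dist hr (fun x hx => ?_) fun x hx => ⟨x, hts hx, by simpa⟩
  obtain ⟨y, hy, hxy⟩ := mem_thickening_iff.1 (hst hx)
  exact ⟨y, hy, hxy.le⟩

theorem hausdorffDist_le_of_nested {s₁ s s₂ t₁ t t₂ : Set E} (hs₁ : s ⊆ s₁) (hs₂ : s₂ ⊆ s)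
    (ht₁ : t ⊆ t₁) (ht₂ : t₂ ⊆ t) (hs₁b : Bornology.IsBounded s₁) (ht₁b : Bornology.IsBounded t₁)
    (hs₂ne : s₂.Nonempty) (ht₂ne : t₂.Nonempty) :
    hausdorffDist s t ≤
      hausdorffDist t₁ t₂ + max (hausdorffDist s₁ t₁) (hausdorffDist s₂ t₂) := by
  have hst₁ : hausdorffEDist s₁ t₁ ≠ ⊤ := hausdorffEDist_ne_top_of_nonempty_of_bounded
    (hs₂ne.mono (hs₂.trans hs₁)) (ht₂ne.mono (ht₂.trans ht₁)) hs₁b ht₁b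
  have ht₁₂ : hausdorffEDist t₁ t₂ ≠ ⊤ := hausdorffEDist_ne_top_of_nonempty_of_bounded
    (ht₂ne.mono (ht₂.trans ht₁)) ht₂ne ht₁b (ht₁b.subset (ht₂.trans ht₁))
  have ht₂s₂ : hausdorffEDist t₂ s₂ ≠ ⊤ := hausdorffEDist_ne_top_of_nonempty_of_bounded
    ht₂ne hs₂ne (ht₁b.subset (ht₂.trans ht₁)) (hs₁b.subset (hs₂.trans hs₁))
  have hmax₁ := le_max_left (hausdorffDist s₁ t₁) (hausdorffDist s₂ t₂)
  have hmax₂ := le_max_right (hausdorffDist s₁ t₁) (hausdorffDist s₂ t₂)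
  refine hausdorffDist_le_of_infDist
    (add_nonneg hausdorffDist_nonneg (hausdorffDist_nonneg.trans hmax₁))
    (fun x hx => ?_) fun x hx => ?_
  · calc infDist x t ≤ infDist x t₂ := infDist_le_infDist_of_subset ht₂ ht₂ne
      _ ≤ infDist x t₁ + hausdorffDist t₁ t₂ := infDist_le_infDist_add_hausdorffDist ht₁₂
      _ ≤ hausdorffDist s₁ t₁ + hausdorffDist t₁ t₂ := by
        gcongr; exact infDist_le_hausdorffDist_of_mem (hs₁ hx) hst₁
      _ ≤ _ := by linarith
  · calc infDist x s ≤ infDist x s₂ := infDist_le_infDist_of_subset hs₂ hs₂ne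
      _ ≤ infDist x t₂ + hausdorffDist t₂ s₂ := infDist_le_infDist_add_hausdorffDist ht₂s₂
      _ ≤ hausdorffDist t₁ t₂ + hausdorffDist s₂ t₂ := by
        rw [hausdorffDist_comm (s := t₂)]
        gcongr; exact infDist_le_hausdorffDist_of_mem (ht₁ hx) ht₁₂
      _ ≤ _ := by linarith

end Hausdorff

section SuperlevelSets

variable {E : Type*} [MetricSpace E] {f : E → ℝ}

theorem exists_superlevel_subset_thickening_of_lt {α γ ε : ℝ} (hγα : γ < α) (hε : 0 < ε)
    (hcpt : ∀ β ∈ Ico γ α, IsCompact {x | β ≤ f x}) :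
    ∃ β ∈ Ioo γ α, {x | β ≤ f x} ⊆ thickening ε {x | α ≤ f x} := by
  have : Nonempty (Ioo γ α) := nonempty_Ioo_subtype hγα
  set V := thickening ε {x | α ≤ f x}
  let t : Ioo γ α → Set E := fun β => {x | (β : ℝ) ≤ f x} \ V
  have ht_anti : Antitone t := fun _ _ h => sdiff_subset_sdiff_left (setOf_le_subset_setOf_le h)
  have ht_closed : ∀ β, IsClosed (t β) := fun β =>
    (hcpt β (Ioo_subset_Ico_self β.2)).isClosed.sdiff isOpen_thickening
  have hinter : {x | γ ≤ f x} ∩ ⋂ β, t β = ∅ := by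
    refine eq_empty_of_forall_notMem fun x ⟨_, hx⟩ => ?_
    have hxt : ∀ β : Ioo γ α, (β : ℝ) ≤ f x ∧ x ∉ V := fun β => mem_iInter.1 hx β
    refine (hxt (Classical.arbitrary _)).2 (self_subset_thickening hε _ ?_)
    by_contra! hfx
    set β := (max (f x) γ + α) / 2
    have hβ : β ∈ Ioo γ α := ⟨by grind, by grind⟩
    have := (hxt ⟨β, hβ⟩).1
    grind
  obtain ⟨β, hβ⟩ := (hcpt γ ⟨le_rfl, hγα⟩).elim_directed_family_closed t ht_closed hinter
    ht_anti.directed_ge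
  refine ⟨β, β.2, fun x hx => by_contra fun hxV => ?_⟩
  exact hβ.subset ⟨setOf_le_subset_setOf_le β.2.1.le hx, hx, hxV⟩

theorem exists_superlevel_subset_thickening_of_gt {α γ ε : ℝ} (hαγ : α < γ) (hε : 0 < ε)
    (hcpt : IsCompact {x | α ≤ f x}) (hcl : {x | α ≤ f x} ⊆ closure {x | α < f x}) :
    ∃ β ∈ Ioo α γ, {x | α ≤ f x} ⊆ thickening ε {x | β ≤ f x} := by
  have : Nonempty (Ioo α γ) := nonempty_Ioo_subtype hαγ
  let U : Ioo α γ → Set E := fun β => thickening ε {x | (β : ℝ) ≤ f x}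
  have hU_anti : Antitone U := fun _ _ h =>
    thickening_subset_of_subset ε (setOf_le_subset_setOf_le h)
  have hcover : {x | α ≤ f x} ⊆ ⋃ β, U β := by
    intro x hx
    obtain ⟨y, hy, hxy⟩ := Metric.mem_closure_iff.1 (hcl hx) ε hε
    have hβ : min (f y) ((α + γ) / 2) ∈ Ioo α γ := ⟨lt_min hy (by linarith), by grind⟩
    exact mem_iUnion.2
      ⟨⟨_, hβ⟩, mem_thickening_iff.2 ⟨y, show min (f y) _ ≤ f y from min_le_left _ _, hxy⟩⟩
  obtain ⟨β, hβ⟩ := hcpt.elim_directed_cover U (fun _ => isOpen_thickening) hcover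
    hU_anti.directed_le
  exact ⟨β, β.2, hβ⟩

theorem exists_hausdorffDist_superlevel_le {α γ₁ γ₂ ε : ℝ} (hγ₁ : γ₁ < α) (hγ₂ : α < γ₂)
    (hε : 0 < ε) (hcpt : ∀ β ∈ Icc γ₁ α, IsCompact {x | β ≤ f x})
    (hcl : {x | α ≤ f x} ⊆ closure {x | α < f x}) :
    ∃ β₁ ∈ Ioo γ₁ α, ∃ β₂ ∈ Ioo α γ₂,
      hausdorffDist {x | β₁ ≤ f x} {x | β₂ ≤ f x} ≤ ε := by
  obtain ⟨β₁, hβ₁, h₁⟩ := exists_superlevel_subset_thickening_of_lt hγ₁ (half_pos hε)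
    fun β hβ => hcpt β (Ico_subset_Icc_self hβ)
  obtain ⟨β₂, hβ₂, h₂⟩ := exists_superlevel_subset_thickening_of_gt hγ₂ (half_pos hε)
    (hcpt α ⟨hγ₁.le, le_rfl⟩) hcl
  refine ⟨β₁, hβ₁, β₂, hβ₂, hausdorffDist_le_of_subset_of_subset_thickening hε.le
    (setOf_le_subset_setOf_le (hβ₁.2.trans hβ₂.1).le) ?_⟩
  calc {x | β₁ ≤ f x} ⊆ thickening (ε / 2) (thickening (ε / 2) {x | β₂ ≤ f x}) :=
        h₁.trans (thickening_subset_of_subset _ h₂)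
    _ ⊆ thickening ε {x | β₂ ≤ f x} := by
        simpa using thickening_thickening_subset (ε / 2) (ε / 2) {x | β₂ ≤ f x}

end SuperlevelSets

theorem exists_mem_nhds_eventually_hausdorffDist_superlevel_lt {E ι : Type*} [MetricSpace E]
    {l : Filter ι} {Fn : ι → E → ℝ} {f : E → ℝ} {αmax α ε : ℝ} (hα₀ : 0 < α) (hα : α < αmax)
    (hε : 0 < ε) (hFn_cpt : ∀ i, ∀ β : ℝ, 0 < β → IsCompact {x | β ≤ Fn i x})
    (hf_cpt : ∀ β : ℝ, 0 < β → IsCompact {x | β ≤ f x}) (hf_ne : {x | αmax ≤ f x}.Nonempty)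
    (hcl : {x | α ≤ f x} ⊆ closure {x | α < f x})
    (hconv : ∀ β : ℝ, 0 < β → β < αmax →
      Tendsto (fun i => hausdorffDist {x | β ≤ Fn i x} {x | β ≤ f x}) l (𝓝 0))
    (hFn_ne : ∀ β : ℝ, 0 < β → β < αmax → ∀ᶠ i in l, {x | β ≤ Fn i x}.Nonempty) :
    ∃ U ∈ 𝓝 α, ∀ᶠ i in l, ∀ α' ∈ U,
      hausdorffDist {x | α' ≤ Fn i x} {x | α' ≤ f x} < ε := by
  obtain ⟨β₁, hβ₁, β₂, hβ₂, hβ₁₂⟩ := exists_hausdorffDist_superlevel_le (half_lt_self hα₀) hα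
    (half_pos hε) (fun β hβ => hf_cpt β (by linarith [hβ.1])) hcl
  have hβ₁₀ : 0 < β₁ := by linarith [hβ₁.1]
  have hβ₂₀ : 0 < β₂ := hα₀.trans hβ₂.1
  refine ⟨Ioo β₁ β₂, Ioo_mem_nhds hβ₁.2 hβ₂.1, ?_⟩
  filter_upwards [(hconv β₁ hβ₁₀ (hβ₁.2.trans hα)).eventually (gt_mem_nhds (half_pos hε)),
    (hconv β₂ hβ₂₀ hβ₂.2).eventually (gt_mem_nhds (half_pos hε)), hFn_ne β₂ hβ₂₀ hβ₂.2]
    with i h₁ h₂ hne₂ α' hα'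
  calc hausdorffDist {x | α' ≤ Fn i x} {x | α' ≤ f x}
      ≤ hausdorffDist {x | β₁ ≤ f x} {x | β₂ ≤ f x} +
          max (hausdorffDist {x | β₁ ≤ Fn i x} {x | β₁ ≤ f x})
            (hausdorffDist {x | β₂ ≤ Fn i x} {x | β₂ ≤ f x}) :=
        hausdorffDist_le_of_nested (setOf_le_subset_setOf_le hα'.1.le)
          (setOf_le_subset_setOf_le hα'.2.le) (setOf_le_subset_setOf_le hα'.1.le)
          (setOf_le_subset_setOf_le hα'.2.le) (hFn_cpt i β₁ hβ₁₀).isBounded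
          (hf_cpt β₁ hβ₁₀).isBounded hne₂ (hf_ne.mono (setOf_le_subset_setOf_le hβ₂.2.le))
    _ < ε := by linarith [max_lt h₁ h₂]

theorem pointwise_iff_compact_region_convergence_general {d : ℕ}
    (Dn : ℕ → EuclideanSpace ℝ (Fin d) → ℝ) (D : EuclideanSpace ℝ (Fin d) → ℝ)
    (hDn_cpt : ∀ n, ∀ α : ℝ, 0 < α → IsCompact {z | α ≤ Dn n z})
    (hD_cpt : ∀ α : ℝ, 0 < α → IsCompact {z | α ≤ D z})
    (αmax : ℝ) (hmax : IsGreatest (Set.range D) αmax)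
    (hsm : ∀ α : ℝ, 0 < α → α < αmax → {z | α ≤ D z} = closure {z | α < D z})
    (hne : ∀ α : ℝ, 0 < α → α < αmax →
      ∀ᶠ n in atTop, {z | α ≤ Dn n z}.Nonempty) :
    (∀ α : ℝ, 0 < α → α < αmax →
        Tendsto (fun n => hausdorffDist {z | α ≤ Dn n z} {z | α ≤ D z}) atTop (nhds 0))
      ↔ (∀ a b : ℝ, 0 < a → b < αmax → ∀ ε : ℝ, 0 < ε → ∃ N, ∀ n ≥ N,
          ∀ α ∈ Set.Icc a b,
            hausdorffDist {z | α ≤ Dn n z} {z | α ≤ D z} < ε) := by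
  obtain ⟨z, hz⟩ := hmax.1
  refine ⟨fun hconv a b ha hb ε hε => ?_, fun hunif α hα₀ hα => ?_⟩
  · refine eventually_atTop.1 (isCompact_Icc.eventually_forall_of_forall_exists_mem_nhds
      fun α hα => ?_)
    have hα₀ : 0 < α := ha.trans_le hα.1
    have hαmax : α < αmax := hα.2.trans_lt hb
    exact exists_mem_nhds_eventually_hausdorffDist_superlevel_lt hα₀ hαmax hε hDn_cpt hD_cpt
      ⟨z, hz.ge⟩ (hsm α hα₀ hαmax).subset hconv hne
  · refine tendsto_order.2 ⟨fun r hr => Eventually.of_forall fun n => hr.trans_le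
      hausdorffDist_nonneg, fun ε hε => eventually_atTop.2 ?_⟩
    obtain ⟨N, hN⟩ := hunif α α hα₀ hα ε hε
    exact ⟨N, fun n hn => hN n hn α (left_mem_Icc.2 le_rfl)⟩

/-- For depth functions with `D` strictly monotone, pointwise Hausdorff convergence of
the trimmed regions on `(0, αmax)` is equivalent to compact Hausdorff convergence on
every compact interval of `(0, αmax)`. -/
theorem pointwise_iff_compact_region_convergence {d : ℕ}
    (Dn : ℕ → EuclideanSpace ℝ (Fin d) → ℝ) (D : EuclideanSpace ℝ (Fin d) → ℝ)
    (hDn_nn : ∀ n z, 0 ≤ Dn n z) (hD_nn : ∀ z, 0 ≤ D z)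
    (hDn_cpt : ∀ n, ∀ α : ℝ, 0 < α → IsCompact {z | α ≤ Dn n z})
    (hD_cpt : ∀ α : ℝ, 0 < α → IsCompact {z | α ≤ D z})
    (αmax : ℝ) (hmax : IsGreatest (Set.range D) αmax)
    (hsm : ∀ α : ℝ, 0 < α → α < αmax → {z | α ≤ D z} = closure {z | α < D z})
    (hne : ∀ α : ℝ, 0 < α → α < αmax →
      ∀ᶠ n in atTop, {z | α ≤ Dn n z}.Nonempty) :
    (∀ α : ℝ, 0 < α → α < αmax →
        Tendsto (fun n => hausdorffDist {z | α ≤ Dn n z} {z | α ≤ D z}) atTop (nhds 0))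
      ↔ (∀ a b : ℝ, 0 < a → b < αmax → ∀ ε : ℝ, 0 < ε → ∃ N, ∀ n ≥ N,
          ∀ α ∈ Set.Icc a b,
            hausdorffDist {z | α ≤ Dn n z} {z | α ≤ D z} < ε) :=
  pointwise_iff_compact_region_convergence_general Dn D hDn_cpt hD_cpt αmax hmax hsm hne
end

section
/- Let D^n, D : ℝ^d → [0,∞) be depth functions with compact convex superlevel sets having nonempty interior for levels in (0, α_max), where α_max = max D, and suppose D is continuous on ℝ^d. If D^n → D pointwise and the range condition limsup_n (max D^n) ≤ α_max holds, then D^n → D uniformly on ℝ^d. -/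
open Filter Metric Set Topology

/-!
Convexity of the superlevel sets of `Dⁿ` turns pointwise information at finitely many points into
uniform information: a lower bound for `Dⁿ` at the vertices of a simplex holds on the whole
simplex. Covering the compact set `{D ≥ η}` by finitely many such simplices gives `Dⁿ ≥ D - η`
eventually, uniformly in `z`.

For the upper bound fix a level `α` and a ball around an interior point of `{D ≥ α - δ/4}`, on
which eventually `Dⁿ ≥ α - δ/2`. If `Dⁿ z ≥ α - δ/2` but `D z < α - δ`, the segment towards `z`
meets the compact level set `{D = α - δ}` at some `w`, and `{Dⁿ ≥ α - δ/2}` contains the cone over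
the ball with apex `w`. Slightly before its apex this cone contains a ball of fixed radius in the
region `{D < α - δ/2}`, hence a point of a fixed finite net, where pointwise convergence forbids
`Dⁿ ≥ α - δ/2`. Finitely many levels, together with the range condition for levels above `αmax`,
make this uniform.
-/

theorem IsCompact.eventually_forall_of_forall_eventually_prod {ι X : Type*} [TopologicalSpace X]
    {l : Filter ι} {K : Set X} (hK : IsCompact K) {P : ι → X → Prop}
    (h : ∀ x ∈ K, ∀ᶠ p in l ×ˢ 𝓝 x, P p.1 p.2) : ∀ᶠ i in l, ∀ x ∈ K, P i x :=
  Eventually.curry (p := fun q : ι × X => P q.1 q.2) (hK.mem_prod_nhdsSet_of_forall h)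
    |>.mono fun _ hi => hi.self_of_nhdsSet

section NormedSpace

variable {E : Type*} [NormedAddCommGroup E] [NormedSpace ℝ E]

theorem Convex.ball_lineMap_subset {S : Set E} (hS : Convex ℝ S) {x w : E} {r τ : ℝ}
    (hball : ball x r ⊆ S) (hw : w ∈ S) (hτ₀ : 0 ≤ τ) (hτ₁ : τ < 1) :
    ball (AffineMap.lineMap x w τ) ((1 - τ) * r) ⊆ S := by
  intro y hy
  have hτ : 0 < 1 - τ := sub_pos.2 hτ₁
  set q := x + (1 - τ)⁻¹ • (y - AffineMap.lineMap x w τ)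
  have hq : q ∈ ball x r := by
    rw [mem_ball, dist_eq_norm, add_sub_cancel_left, norm_smul, Real.norm_eq_abs, abs_inv,
      abs_of_pos hτ, ← dist_eq_norm, inv_mul_lt_iff₀ hτ]
    exact hy
  convert hS (hball hq) hw hτ.le hτ₀ (sub_add_cancel 1 τ) using 1
  simp only [q, AffineMap.lineMap_apply_module, smul_add, smul_smul, mul_inv_cancel₀ hτ.ne']
  module

theorem IsCompact.exists_lt_one_forall_lineMap_lt {Z : Set E} (hZ : IsCompact Z) {g : E → ℝ}
    (hg : Continuous g) (x : E) {β : ℝ} (h : ∀ z ∈ Z, g z < β) :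
    ∃ τ ∈ Ico (0 : ℝ) 1, ∀ z ∈ Z, g (AffineMap.lineMap x z τ) < β := by
  have hnear : ∀ᶠ τ in 𝓝 (1 : ℝ), ∀ z ∈ Z, g (AffineMap.lineMap x z τ) < β := by
    refine hZ.eventually_forall_of_forall_eventually fun z hz => ?_
    have hcont : Continuous fun p : ℝ × E => g (AffineMap.lineMap x p.2 p.1) := by fun_prop
    exact hcont.continuousAt.eventually (eventually_lt_nhds (by simpa using h z hz))
  have hIco : ∀ᶠ τ in 𝓝[<] (1 : ℝ), τ ∈ Ico (0 : ℝ) 1 :=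
    Ico_mem_nhdsLT_of_mem ⟨zero_lt_one, le_rfl⟩
  exact (hIco.and (hnear.filter_mono nhdsWithin_le_nhds)).exists

variable {ι : Type*} {l : Filter ι} {f : ι → E → ℝ} {g : E → ℝ}

theorem eventually_superlevel_subset_of_ball (hg : Continuous g) {β γ : ℝ} (hγβ : γ < β)
    (hγ : IsCompact {z | γ ≤ g z}) (hcvx : ∀ i, Convex ℝ {z | β ≤ f i z})
    (hlim : ∀ z, Tendsto (f · z) l (𝓝 (g z))) {x : E} {r : ℝ} (hr : 0 < r) (hx : γ ≤ g x)
    (hball : ∀ᶠ i in l, ∀ q ∈ ball x r, β ≤ f i q) :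
    ∀ᶠ i in l, ∀ z, β ≤ f i z → γ ≤ g z := by
  have hZ : IsCompact {z | g z = γ} :=
    hγ.of_isClosed_subset (isClosed_eq hg continuous_const) fun z hz => hz.ge
  obtain ⟨τ, ⟨hτ₀, hτ₁⟩, hτ⟩ :=
    hZ.exists_lt_one_forall_lineMap_lt hg x fun z (hz : g z = γ) => hz ▸ hγβ
  obtain ⟨F, hFQ, hF, hQF⟩ := finite_cover_balls_of_compact
    (hZ.image (by fun_prop : Continuous fun z => AffineMap.lineMap x z τ))
    (mul_pos (sub_pos.2 hτ₁) hr)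
  have hFβ : ∀ᶠ i in l, ∀ y ∈ F, f i y < β := (eventually_all_finite hF).2 fun y hy => by
    obtain ⟨w, hw, rfl⟩ := hFQ hy
    exact (hlim _).eventually (eventually_lt_nhds (hτ w hw))
  filter_upwards [hball, hFβ] with i hB hFi z hz
  by_contra! hzγ
  obtain ⟨w, hw_seg, hw⟩ : ∃ w ∈ segment ℝ x z, g w = γ :=
    (convex_segment x z).isPreconnected.intermediate_value (right_mem_segment ℝ x z)
      (left_mem_segment ℝ x z) hg.continuousOn ⟨hzγ.le, hx⟩
  have hwf : β ≤ f i w := (hcvx i).segment_subset (hB x (mem_ball_self hr)) hz hw_seg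
  obtain ⟨y, hyF, hy⟩ := mem_iUnion₂.1 (hQF (mem_image_of_mem _ hw))
  exact (hFi y hyF).not_ge ((hcvx i).ball_lineMap_subset hB hwf hτ₀ hτ₁ (mem_ball_comm.1 hy))

variable [FiniteDimensional ℝ E]

theorem eventually_le_of_eventually_nhds_lt {β : ℝ} (hcvx : ∀ i, Convex ℝ {z | β ≤ f i z})
    (hlim : ∀ z, Tendsto (f · z) l (𝓝 (g z))) {x : E} (hx : ∀ᶠ w in 𝓝 x, β < g w) :
    ∀ᶠ p in l ×ˢ 𝓝 x, β ≤ f p.1 p.2 := by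
  obtain ⟨b, hxb, hbg⟩ := exists_mem_interior_convexHull_affineBasis hx
  have hvert : ∀ᶠ i in l, ∀ j, β < f i (b j) := eventually_all.2 fun j =>
    (hlim _).eventually (eventually_gt_nhds (hbg (subset_convexHull ℝ _ (mem_range_self j))))
  filter_upwards [prod_mem_prod hvert (isOpen_interior.mem_nhds hxb)] with ⟨i, z⟩ ⟨hi, hz⟩
  have hhull : convexHull ℝ (range b) ⊆ {z | β ≤ f i z} :=
    convexHull_min (range_subset_iff.2 fun j => (hi j).le) (hcvx i)
  exact hhull (interior_subset hz)

theorem eventually_sub_le_of_convex_superlevel (hg : Continuous g) (hf₀ : ∀ i z, 0 ≤ f i z)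
    (hcvx : ∀ i, ∀ β : ℝ, 0 < β → Convex ℝ {z | β ≤ f i z})
    (hlim : ∀ z, Tendsto (f · z) l (𝓝 (g z))) {η : ℝ} (hη : 0 < η)
    (hK : IsCompact {z | η ≤ g z}) : ∀ᶠ i in l, ∀ z, g z - η ≤ f i z := by
  have hlocal : ∀ x ∈ {z | η ≤ g z}, ∀ᶠ p in l ×ˢ 𝓝 x, g p.2 - η ≤ f p.1 p.2 := by
    intro x (hx : η ≤ g x)
    have hlow := eventually_le_of_eventually_nhds_lt (hcvx · (g x - η / 2) (by linarith)) hlim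
      (hg.continuousAt.eventually (eventually_gt_nhds (by linarith : g x - η / 2 < g x)))
    have hup : ∀ᶠ p in l ×ˢ 𝓝 x, g p.2 < g x + η / 2 :=
      tendsto_snd.eventually (hg.continuousAt.eventually (eventually_lt_nhds (by linarith)))
    filter_upwards [hlow, hup] with p hp₁ hp₂
    linarith
  filter_upwards [hK.eventually_forall_of_forall_eventually_prod
    (P := fun i z => g z - η ≤ f i z) hlocal] with i hi z
  by_cases hz : η ≤ g z
  · exact hi z hz
  · linarith [hf₀ i z, not_le.1 hz]

end NormedSpace

theorem eventually_le_add_of_superlevel_subset {ι X : Type*} {l : Filter ι} {f : ι → X → ℝ}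
    {g : X → ℝ} {M : ℝ} (hg₀ : ∀ x, 0 ≤ g x) (hgM : ∀ x, g x ≤ M)
    (h : ∀ α δ : ℝ, 0 < δ → ∀ᶠ i in l, ∀ x, α ≤ f i x → α - δ ≤ g x) {ε : ℝ} (hε : 0 < ε) :
    ∀ᶠ i in l, ∀ x, f i x ≤ g x + ε := by
  have hη : 0 < ε / 2 := half_pos hε
  obtain ⟨K, hK⟩ := exists_nat_gt (M / (ε / 2) + 1)
  have hlevels : ∀ᶠ i in l, ∀ k ∈ Finset.range (K + 1), ∀ x,
      k * (ε / 2) ≤ f i x → k * (ε / 2) - ε / 2 ≤ g x :=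
    (eventually_all_finset _).2 fun k _ => h _ _ hη
  filter_upwards [hlevels] with i hi x
  by_contra! hx
  have hf : 0 ≤ f i x / (ε / 2) := div_nonneg (by linarith [hg₀ x]) hη.le
  have hfloor : (⌊f i x / (ε / 2)⌋₊ : ℝ) * (ε / 2) ≤ f i x :=
    (le_div_iff₀ hη).1 (Nat.floor_le hf)
  rcases le_or_gt ⌊f i x / (ε / 2)⌋₊ K with hk | hk
  · have hlt : f i x < (⌊f i x / (ε / 2)⌋₊ + 1) * (ε / 2) :=
      (div_lt_iff₀ hη).1 (Nat.lt_floor_add_one _)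
    linarith [hi _ (Finset.mem_range_succ_iff.2 hk) x hfloor]
  · have hKf : (K : ℝ) * (ε / 2) ≤ f i x :=
      le_trans (by gcongr) hfloor
    have hKM : M + ε / 2 < K * (ε / 2) := by
      rwa [div_add_one hη.ne', div_lt_iff₀ hη] at hK
    linarith [hi K (Finset.self_mem_range_succ K) x hKf, hgM x]

theorem eventually_superlevel_subset_superlevel_sub {E ι : Type*} [NormedAddCommGroup E]
    [NormedSpace ℝ E] [FiniteDimensional ℝ E] {l : Filter ι} {f : ι → E → ℝ} {g : E → ℝ}
    (hf₀ : ∀ i z, 0 ≤ f i z) (hg₀ : ∀ z, 0 ≤ g z) (hg : Continuous g)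
    (hcpt : ∀ α : ℝ, 0 < α → IsCompact {z | α ≤ g z})
    (hcvx : ∀ i, ∀ α : ℝ, 0 < α → Convex ℝ {z | α ≤ f i z})
    (hlim : ∀ z, Tendsto (f · z) l (𝓝 (g z))) {αmax : ℝ}
    (hint : ∀ α : ℝ, 0 < α → α < αmax → (interior {z | α ≤ g z}).Nonempty)
    (hrange : ∀ α : ℝ, αmax < α → ∀ᶠ i in l, {z | α ≤ f i z} = ∅)
    (α δ : ℝ) (hδ : 0 < δ) : ∀ᶠ i in l, ∀ z, α ≤ f i z → α - δ ≤ g z := by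
  rcases lt_or_ge αmax α with hα | hα
  · filter_upwards [hrange α hα] with i hi z hz
    exact (hi.subset hz).elim
  rcases le_or_gt α δ with hαδ | hαδ
  · exact .of_forall fun i z _ => by linarith [hg₀ z]
  obtain ⟨x, hx⟩ := hint (α - δ / 4) (by linarith) (by linarith)
  obtain ⟨r, hr, hxr⟩ := Metric.isOpen_iff.1 isOpen_interior x hx
  have hball : ∀ᶠ i in l, ∀ q ∈ ball x r, α - δ / 2 ≤ f i q :=
    (eventually_sub_le_of_convex_superlevel hg hf₀ hcvx hlim (by linarith : 0 < δ / 4)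
      (hcpt _ (by linarith))).mono fun i hi q hq => by
        linarith [hi q, interior_subset (hxr hq) |>.out]
  filter_upwards [eventually_superlevel_subset_of_ball hg (by linarith : α - δ < α - δ / 2)
    (hcpt _ (by linarith)) (fun i => hcvx i _ (by linarith)) hlim hr
    (by linarith [(interior_subset hx).out]) hball] with i hi z hz
  exact hi z (by linarith)

theorem pointwise_and_range_condition_implies_uniform_convergence_general {d : ℕ}
    (Dn : ℕ → EuclideanSpace ℝ (Fin d) → ℝ) (D : EuclideanSpace ℝ (Fin d) → ℝ)
    (hDn_nn : ∀ n z, 0 ≤ Dn n z) (hD_nn : ∀ z, 0 ≤ D z)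
    (hD_cpt : ∀ α : ℝ, 0 < α → IsCompact {z | α ≤ D z})
    (hDn_cvx : ∀ n, ∀ α : ℝ, 0 < α → Convex ℝ {z | α ≤ Dn n z})
    (hD_cont : Continuous D)
    (αmax : ℝ) (hmax : IsGreatest (Set.range D) αmax)
    (hint : ∀ α : ℝ, 0 < α → α < αmax → (interior {z | α ≤ D z}).Nonempty)
    (hptw : ∀ z, Tendsto (fun n => Dn n z) atTop (nhds (D z)))
    (hRC : ∀ α : ℝ, αmax < α → ∃ N, ∀ n ≥ N, {z | α ≤ Dn n z} = ∅) :
    TendstoUniformly (fun n => Dn n) D atTop := by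
  have hlevel := eventually_superlevel_subset_superlevel_sub hDn_nn hD_nn hD_cont hD_cpt
    hDn_cvx hptw hint fun α hα => eventually_atTop.2 (hRC α hα)
  rw [Metric.tendstoUniformly_iff]
  intro ε hε
  filter_upwards [eventually_sub_le_of_convex_superlevel hD_cont hDn_nn hDn_cvx hptw
      (half_pos hε) (hD_cpt _ (half_pos hε)),
    eventually_le_add_of_superlevel_subset hD_nn (fun z => hmax.2 (mem_range_self z)) hlevel
      (half_pos hε)] with n hlow hup z
  rw [Real.dist_eq, abs_lt]
  constructor <;> linarith [hlow z, hup z]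

/-- For convex depth functions with `D` continuous, pointwise convergence of the depths
together with the range condition implies uniform convergence on `ℝ^d`. -/
theorem pointwise_and_range_condition_implies_uniform_convergence {d : ℕ}
    (Dn : ℕ → EuclideanSpace ℝ (Fin d) → ℝ) (D : EuclideanSpace ℝ (Fin d) → ℝ)
    (hDn_nn : ∀ n z, 0 ≤ Dn n z) (hD_nn : ∀ z, 0 ≤ D z)
    (hDn_cpt : ∀ n, ∀ α : ℝ, 0 < α → IsCompact {z | α ≤ Dn n z})
    (hD_cpt : ∀ α : ℝ, 0 < α → IsCompact {z | α ≤ D z})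
    (hDn_cvx : ∀ n, ∀ α : ℝ, 0 < α → Convex ℝ {z | α ≤ Dn n z})
    (hD_cvx : ∀ α : ℝ, 0 < α → Convex ℝ {z | α ≤ D z})
    (hD_cont : Continuous D)
    (αmax : ℝ) (hmax : IsGreatest (Set.range D) αmax)
    (hint : ∀ α : ℝ, 0 < α → α < αmax → (interior {z | α ≤ D z}).Nonempty)
    (hptw : ∀ z, Tendsto (fun n => Dn n z) atTop (nhds (D z)))
    (hRC : ∀ α : ℝ, αmax < α → ∃ N, ∀ n ≥ N, {z | α ≤ Dn n z} = ∅) :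
    TendstoUniformly (fun n => Dn n) D atTop :=
  pointwise_and_range_condition_implies_uniform_convergence_general Dn D hDn_nn hD_nn hD_cpt hDn_cvx
    hD_cont αmax hmax hint hptw hRC
end
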